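/- Let F be an n × m Ferrers diagram with m ≥ n and let 2 ≤ d ≤ n. Then κ(F,d) = Σ_{i=1}^{m} max{0, |D_i ∩ F| - d + 1} if and only if κ(F,d) = Σ_{i=1}^{m+n-1} max{0, |D_i ∩ F| - d + 1}. -/

import Mathlib

/-- The `n × m` matrix board `[n] × [m]` (1-based). -/
def board (n m : ℕ) : Finset (ℕ × ℕ) := Finset.Icc 1 n ×ˢ Finset.Icc 1 m

/-- `F` is an `n × m` Ferrers diagram: contained in the board, contains `(1,1)` and `(n,m)`,
right-aligned and top-aligned. -/
def IsFerrers (n m : ℕ) (F : Finset (ℕ × ℕ)) : Prop :=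
  F ⊆ board n m ∧ (1, 1) ∈ F ∧ (n, m) ∈ F ∧
  (∀ i j, (i, j) ∈ F → j < m → (i, j + 1) ∈ F) ∧
  (∀ i j, (i, j) ∈ F → 1 < i → (i - 1, j) ∈ F)

/-- The `r`-th diagonal of the `n × m` board: `{(i,j) : j - i = m - r}`. -/
def diag (n m r : ℕ) : Finset (ℕ × ℕ) :=
  (board n m).filter (fun p => p.2 + r = p.1 + m)

/-- The height `c_t` of the `t`-th column of `F`. -/
def colH (F : Finset (ℕ × ℕ)) (t : ℕ) : ℕ := (F.filter (fun p => p.2 = t)).card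

/-- `κ_j(F,d) = Σ_{t=1}^{m-d+1+j} max{c_t - j, 0}` (truncated subtraction). -/
def kappaJ (F : Finset (ℕ × ℕ)) (m d j : ℕ) : ℕ :=
  ∑ t ∈ Finset.Icc 1 (m - d + 1 + j), (colH F t - j)

/-- `κ(F,d) = min_{0 ≤ j ≤ d-1} κ_j(F,d)`. -/
noncomputable def kappa (F : Finset (ℕ × ℕ)) (m d : ℕ) : ℕ :=
  sInf (kappaJ F m d '' Set.Iio d)

/-- `Σ_{i=1}^{m+n-1} max{0, |D_i ∩ F| - (d-1)}` (truncated subtraction). -/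
def diagSum (n m : ℕ) (F : Finset (ℕ × ℕ)) (d : ℕ) : ℕ :=
  ∑ i ∈ Finset.Icc 1 (m + n - 1), ((diag n m i ∩ F).card - (d - 1))

/-- The pair `(F,d)` is MDS-constructible. -/
def MDSConstructible (n m : ℕ) (F : Finset (ℕ × ℕ)) (d : ℕ) : Prop :=
  kappa F m d = diagSum n m F d

/-! Cut the board along its diagonals. `κ_j(F,d)` counts the cells of `F` outside the top `j`
rows and the right `d - 1 - j` columns, and since `n ≤ m` the `i`-th diagonal meets those rows and
columns in at most `d - 1 - (i - m)` cells. Hence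
`κ(F,d) ≥ Σ_{i ≤ m+n-1} (|D_i ∩ F| - (d - 1 - (i - m))) ≥ Σ_{i ≤ m+n-1} (|D_i ∩ F| - (d - 1))
≥ Σ_{i ≤ m} (|D_i ∩ F| - (d - 1))`, which gives one direction. For the other, a diagonal `D_i`
with `i > m` and at least `d` cells contributes strictly more to the first sum than to the
second (as `d ≥ 2`), so equality of `κ` with the full diagonal sum rules such diagonals out. -/

open Finset

lemma mem_board {n m : ℕ} {p : ℕ × ℕ} :
    p ∈ board n m ↔ 1 ≤ p.1 ∧ p.1 ≤ n ∧ 1 ≤ p.2 ∧ p.2 ≤ m := by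
  simp only [board, mem_product, mem_Icc, and_assoc]

lemma mem_diag_iff {n m i : ℕ} {p : ℕ × ℕ} :
    p ∈ diag n m i ↔ (1 ≤ p.1 ∧ p.1 ≤ n ∧ 1 ≤ p.2 ∧ p.2 ≤ m) ∧ p.2 + i = p.1 + m := by
  rw [_root_.diag, mem_filter, mem_board]

lemma Finset.eq_Icc_one_card_of_Icc_subset {s : Finset ℕ} (h0 : 0 ∉ s)
    (hdown : ∀ a ∈ s, Icc 1 a ⊆ s) : s = Icc 1 #s := by
  rcases s.eq_empty_or_nonempty with rfl | hne
  · rfl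
  · have hs : s = Icc 1 (s.max' hne) := by
      refine Subset.antisymm (fun a ha => mem_Icc.2 ⟨?_, s.le_max' a ha⟩) (hdown _ (s.max'_mem hne))
      exact Nat.one_le_iff_ne_zero.2 fun h => h0 (h ▸ ha)
    conv_rhs => rw [hs, Nat.card_Icc, Nat.add_sub_cancel]
    exact hs

section Ferrers

variable {n m : ℕ} {F : Finset (ℕ × ℕ)}

lemma IsFerrers.mem_of_le (hF : IsFerrers n m F) {i k t : ℕ} (hi : (i, t) ∈ F)
    (hk : 1 ≤ k) (hki : k ≤ i) : (k, t) ∈ F := by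
  induction i with
  | zero => omega
  | succ i ih =>
    rcases hki.eq_or_lt with rfl | hlt
    · exact hi
    · exact ih (by simpa using hF.2.2.2.2 (i + 1) t hi (by omega)) (by omega)

lemma IsFerrers.filter_snd_eq (hF : IsFerrers n m F) (t : ℕ) :
    F.filter (·.2 = t) = Icc 1 (colH F t) ×ˢ {t} := by
  set rows := (F.filter (·.2 = t)).image Prod.fst
  have hcol : F.filter (·.2 = t) = rows ×ˢ {t} := by
    ext ⟨a, b⟩
    simp only [rows, mem_filter, mem_product, mem_image, mem_singleton, Prod.exists]
    constructor
    · rintro ⟨hab, rfl⟩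
      exact ⟨⟨a, b, ⟨hab, rfl⟩, rfl⟩, rfl⟩
    · rintro ⟨⟨a, b', ⟨hab, rfl⟩, rfl⟩, rfl⟩
      exact ⟨hab, rfl⟩
  have hrows : rows = Icc 1 #rows := by
    refine eq_Icc_one_card_of_Icc_subset ?_ ?_
    · simp only [rows, mem_image, mem_filter, Prod.exists, not_exists, not_and]
      intro a b hab ha
      have := (mem_board.1 (hF.1 hab.1)).1
      omega
    · intro a ha b hb
      simp only [rows, mem_image, mem_filter, Prod.exists] at ha ⊢
      obtain ⟨a, t, ⟨hat, rfl⟩, rfl⟩ := ha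
      rw [mem_Icc] at hb
      exact ⟨b, t, ⟨hF.mem_of_le hat hb.1 hb.2, rfl⟩, rfl⟩
  have hcard : #rows = colH F t := by
    rw [colH, hcol, card_product, card_singleton, mul_one]
  rw [hcol, hrows, hcard]

lemma IsFerrers.colH_le (hF : IsFerrers n m F) (t : ℕ) : colH F t ≤ n := by
  by_contra! h
  have hmem : (n + 1, t) ∈ F.filter (·.2 = t) := by
    rw [hF.filter_snd_eq]
    exact mem_product.2 ⟨mem_Icc.2 ⟨by omega, h⟩, mem_singleton_self t⟩
  have : n + 1 ≤ n := (mem_board.1 (hF.1 (mem_filter.1 hmem).1)).2.1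
  omega

def trimmedBoard (n m d j : ℕ) : Finset (ℕ × ℕ) := Icc (j + 1) n ×ˢ Icc 1 (m - d + 1 + j)

lemma IsFerrers.kappaJ_eq_card_inter_trimmedBoard (hF : IsFerrers n m F) (d j : ℕ) :
    kappaJ F m d j = #(F ∩ trimmedBoard n m d j) := by
  rw [card_eq_sum_card_fiberwise (f := Prod.snd) (t := Icc 1 (m - d + 1 + j)), kappaJ]
  · refine sum_congr rfl fun t ht => ?_
    have hrows : Icc 1 (colH F t) ∩ Icc (j + 1) n = Icc (j + 1) (colH F t) := by
      have := hF.colH_le t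
      ext a
      simp only [mem_inter, mem_Icc]
      omega
    rw [← filter_inter, hF.filter_snd_eq, trimmedBoard, product_inter_product,
      singleton_inter_of_mem ht, hrows, card_product, card_singleton, mul_one, Nat.card_Icc]
    omega
  · intro p hp
    simp only [coe_inter, Set.mem_inter_iff, mem_coe, trimmedBoard, mem_product, mem_Icc] at hp ⊢
    omega

end Ferrers

section Diagonals

variable {n m : ℕ}

lemma card_eq_sum_card_diag_inter {G : Finset (ℕ × ℕ)} (hG : G ⊆ board n m) :
    #G = ∑ i ∈ Icc 1 (m + n - 1), #(diag n m i ∩ G) := by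
  rw [card_eq_sum_card_fiberwise (f := fun p => p.1 + m - p.2) (t := Icc 1 (m + n - 1))]
  · refine sum_congr rfl fun i _ => congrArg card ?_
    ext p
    simp only [mem_filter, mem_inter, mem_diag_iff]
    constructor
    · rintro ⟨hp, rfl⟩
      have := mem_board.1 (hG hp)
      exact ⟨⟨this, by omega⟩, hp⟩
    · rintro ⟨⟨_, h⟩, hp⟩
      exact ⟨hp, by omega⟩
  · intro p hp
    have := mem_board.1 (hG hp)
    simp only [mem_coe, mem_Icc]
    omega

lemma injOn_fst_diag (i : ℕ) : Set.InjOn Prod.fst (diag n m i : Set (ℕ × ℕ)) := by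
  intro p hp q hq h
  rw [mem_coe, mem_diag_iff] at hp hq
  exact Prod.ext h (by omega)

lemma injOn_snd_diag (i : ℕ) : Set.InjOn Prod.snd (diag n m i : Set (ℕ × ℕ)) := by
  intro p hp q hq h
  rw [mem_coe, mem_diag_iff] at hp hq
  exact Prod.ext (by omega) h

lemma card_diag_sdiff_trimmedBoard_le (hmn : n ≤ m) {d i j : ℕ} (hj : j < d) :
    #(diag n m i \ trimmedBoard n m d j) ≤ d - 1 - (i - m) := by
  set S := diag n m i \ trimmedBoard n m d j
  have hS : ∀ p ∈ S, ((1 ≤ p.1 ∧ p.1 ≤ n ∧ 1 ≤ p.2 ∧ p.2 ≤ m) ∧ p.2 + i = p.1 + m) ∧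
      (p.1 ≤ j ∨ m - d + 1 + j < p.2) := by
    intro p hp
    simp only [S, mem_sdiff, mem_diag_iff, trimmedBoard, mem_product, mem_Icc] at hp
    exact ⟨hp.1, by omega⟩
  have hsub (q : ℕ × ℕ → Prop) [DecidablePred q] : (S.filter q : Set (ℕ × ℕ)) ⊆ diag n m i :=
    coe_subset.2 ((filter_subset _ _).trans sdiff_subset)
  have htop : #(S.filter (·.1 ≤ j)) ≤ #(Icc (i - m + 1) j) := by
    refine card_le_card_of_injOn Prod.fst (fun p hp => ?_) ((injOn_fst_diag i).mono (hsub _))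
    rw [mem_coe, mem_filter] at hp
    have := hS p hp.1
    rw [mem_coe, mem_Icc]
    omega
  have hright : #(S.filter (¬ ·.1 ≤ j)) ≤ #(Icc (m - d + 2 + j) (m - (i - m))) := by
    refine card_le_card_of_injOn Prod.snd (fun p hp => ?_) ((injOn_snd_diag i).mono (hsub _))
    rw [mem_coe, mem_filter] at hp
    have := hS p hp.1
    rw [mem_coe, mem_Icc]
    omega
  rw [← card_filter_add_card_filter_not (·.1 ≤ j)]
  rw [Nat.card_Icc] at htop hright
  omega

end Diagonals

lemma exists_kappaJ_eq_kappa (F : Finset (ℕ × ℕ)) (m : ℕ) {d : ℕ} (hd : 0 < d) :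
    ∃ j < d, kappaJ F m d j = kappa F m d :=
  Nat.sInf_mem (s := kappaJ F m d '' Set.Iio d) ⟨_, 0, hd, rfl⟩

lemma IsFerrers.sum_diag_le_kappaJ {n m : ℕ} {F : Finset (ℕ × ℕ)} (hF : IsFerrers n m F)
    (hmn : n ≤ m) {d j : ℕ} (hj : j < d) :
    ∑ i ∈ Icc 1 (m + n - 1), (#(diag n m i ∩ F) - (d - 1 - (i - m))) ≤ kappaJ F m d j := by
  rw [hF.kappaJ_eq_card_inter_trimmedBoard,
    card_eq_sum_card_diag_inter (inter_subset_left.trans hF.1)]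
  refine sum_le_sum fun i _ => ?_
  have hcover : diag n m i ∩ F ⊆
      diag n m i ∩ (F ∩ trimmedBoard n m d j) ∪ diag n m i \ trimmedBoard n m d j := by
    intro p hp
    rw [mem_inter] at hp
    by_cases hT : p ∈ trimmedBoard n m d j
    · exact mem_union_left _ (mem_inter.2 ⟨hp.1, mem_inter.2 ⟨hp.2, hT⟩⟩)
    · exact mem_union_right _ (mem_sdiff.2 ⟨hp.1, hT⟩)
  have := (card_le_card hcover).trans (card_union_le _ _)
  have := card_diag_sdiff_trimmedBoard_le hmn (i := i) hj
  omega

theorem mds_constructible_symmetric_general (n m d : ℕ) (F : Finset (ℕ × ℕ)) (hF : IsFerrers n m F)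
    (hmn : n ≤ m) (hd1 : 2 ≤ d) :
    (kappa F m d = ∑ i ∈ Finset.Icc 1 m, ((diag n m i ∩ F).card - (d - 1))) ↔
      kappa F m d = diagSum n m F d := by
  obtain ⟨j, hj, hκ⟩ := exists_kappaJ_eq_kappa F m (by omega : 0 < d)
  have hn : 1 ≤ n := (mem_board.1 (hF.1 hF.2.1)).2.1
  have hlow := hF.sum_diag_le_kappaJ hmn hj
  have hsplit (f : ℕ → ℕ) : ∑ i ∈ Icc 1 (m + n - 1), f i =
      ∑ i ∈ Icc 1 m, f i + ∑ i ∈ Ioc m (m + n - 1), f i := by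
    simpa only [← Icc_add_one_left_eq_Ioc, zero_add] using
      (sum_Ioc_consecutive f (Nat.zero_le m) (by omega)).symm
  rw [hκ, hsplit, sum_congr rfl fun i hi => by rw [Nat.sub_eq_zero_of_le (mem_Icc.1 hi).2,
    Nat.sub_zero]] at hlow
  rw [diagSum, hsplit]
  have hle : ∀ i ∈ Ioc m (m + n - 1),
      #(diag n m i ∩ F) - (d - 1) ≤ #(diag n m i ∩ F) - (d - 1 - (i - m)) :=
    fun _ _ => by omega
  constructor
  · intro h
    have := sum_le_sum hle
    omega
  · intro h
    have heq := (sum_eq_sum_iff_of_le hle).1 (le_antisymm (sum_le_sum hle) (by omega))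
    have hzero : ∑ i ∈ Ioc m (m + n - 1), (#(diag n m i ∩ F) - (d - 1)) = 0 :=
      sum_eq_zero fun i hi => by have := heq i hi; rw [mem_Ioc] at hi; omega
    omega

theorem mds_constructible_symmetric (n m d : ℕ) (F : Finset (ℕ × ℕ)) (hF : IsFerrers n m F)
    (hmn : n ≤ m) (hd1 : 2 ≤ d) (hd2 : d ≤ n) :
    (kappa F m d = ∑ i ∈ Finset.Icc 1 m, ((diag n m i ∩ F).card - (d - 1))) ↔
      kappa F m d = diagSum n m F d :=
  mds_constructible_symmetric_general n m d F hF hmn hd1
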